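/- arXiv:1002.1598 — 2 statements merged into one kernel-verified Lean document; each statement's English description precedes it below -/
import Mathlib

section
/- A reduced positive definite even binary quadratic form Q(x,y) = 2a x^2 + b xy + 2c y^2 (with -a < b ≤ a ≤ c, and b ≥ 0 if a = c) represents its own inverse class (i.e. Q is SL_2(Z)-equivalent to the form with b replaced by -b) if and only if b = 0 or a = b or a = c. -/
open Matrix

set_option maxHeartbeats 1600000 in
/-- A reduced positive definite even binary quadratic form with Gram matrix
`((2a, b), (b, 2c))` (so `-a < b ≤ a ≤ c`, and `b ≥ 0` if `a = c`) is `SL₂(ℤ)`-equivalent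
to its inverse form `((2a, -b), (-b, 2c))` if and only if `b = 0` or `a = b` or `a = c`. -/
theorem reduced_form_ambiguous_iff (a b c : ℤ) (ha : 0 < a) (hc : 0 < c)
    (h1 : -a < b) (h2 : b ≤ a) (h3 : a ≤ c) (h4 : a = c → 0 ≤ b) :
    (∃ M : Matrix (Fin 2) (Fin 2) ℤ, M.det = 1 ∧
      Mᵀ * !![2 * a, b; b, 2 * c] * M = !![2 * a, -b; -b, 2 * c]) ↔
    (b = 0 ∨ a = b ∨ a = c) := by
  constructor
  · rintro ⟨M, hdet, hM⟩
    by_contra h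
    push_neg at h
    obtain ⟨hb0, hab, hac⟩ := h
    have hba : b ≤ a - 1 := by omega
    have hba' : -(a - 1) ≤ b := by omega
    have hca : a + 1 ≤ c := by omega
    obtain ⟨p, q, r, s, hp, hq, hr, hs⟩ :
        ∃ p q r s : ℤ, M 0 0 = p ∧ M 0 1 = q ∧ M 1 0 = r ∧ M 1 1 = s :=
      ⟨_, _, _, _, rfl, rfl, rfl, rfl⟩
    rw [Matrix.det_fin_two, hp, hq, hr, hs] at hdet
    have e00 : (Mᵀ * !![2 * a, b; b, 2 * c] * M) 0 0 = 2 * a := by rw [hM]; simp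
    have e01 : (Mᵀ * !![2 * a, b; b, 2 * c] * M) 0 1 = -b := by rw [hM]; simp
    simp [Matrix.mul_apply, Fin.sum_univ_two, hp, hq, hr, hs] at e00 e01
    have E1 : 2 * a * p ^ 2 + 2 * b * (p * r) + 2 * c * r ^ 2 = 2 * a := by
      linear_combination (e00 : _)
    have E2 : 2 * a * (p * q) + b * (p * s + q * r) + 2 * c * (r * s) = -b := by
      linear_combination (e01 : _)
    have key : 4 * a * a = (2 * a * p + b * r) ^ 2 + (4 * a * c - b ^ 2) * r ^ 2 := by
      linear_combination -2 * a * E1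
    have hD : 3 * a ^ 2 + 6 * a - 1 ≤ 4 * a * c - b ^ 2 := by nlinarith
    have hrz : r = 0 := by
      by_contra hrne
      have hr2 : 1 ≤ r ^ 2 := by rcases lt_or_gt_of_ne hrne with h' | h' <;> nlinarith
      have hr2' : r ^ 2 = 1 := by
        by_contra hh
        have h2' : 2 ≤ r ^ 2 := by omega
        nlinarith [sq_nonneg (2 * a * p + b * r)]
      have ht : (2 * a * p + b * r) ^ 2 ≤ b ^ 2 - 4 * a := by nlinarith
      have hexp : (2 * a * p + b * r) ^ 2 = 4 * a ^ 2 * p ^ 2 + 4 * a * b * (p * r) + b ^ 2 := by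
        linear_combination b ^ 2 * hr2'
      rw [hexp] at ht
      have hpr2 : (p * r) ^ 2 = p ^ 2 := by linear_combination p ^ 2 * hr2'
      rcases lt_trichotomy (p * r) 0 with hlt | heq | hgt
      · have h1' : p * r ≤ -1 := by omega
        have hple : -(p * r) ≤ p ^ 2 := by nlinarith
        nlinarith [mul_nonneg (mul_pos ha ha).le (by linarith : (0:ℤ) ≤ p ^ 2 + p * r),
          mul_nonneg (by linarith : (0:ℤ) ≤ -(p * r) - 1) (by omega : (0:ℤ) ≤ a - b)]
      · rw [heq] at ht; nlinarith [sq_nonneg p]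
      · have h1' : 1 ≤ p * r := by omega
        have hple : p * r ≤ p ^ 2 := by nlinarith
        nlinarith [mul_nonneg (mul_pos ha ha).le (by linarith : (0:ℤ) ≤ p ^ 2 - p * r),
          mul_nonneg (by linarith : (0:ℤ) ≤ p * r - 1) (by omega : (0:ℤ) ≤ a + b)]
    rw [hrz] at E1 E2 hdet
    have hp2 : p ^ 2 = 1 := by
      have h' : (2 * a) * p ^ 2 = (2 * a) * 1 := by linarith
      exact mul_left_cancel₀ (by linarith) h'
    have hsp : s = p := by linear_combination (-s) * hp2 + p * hdet
    rw [hsp] at E2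
    have hfin : a * (p * q) = -b := by nlinarith [hp2]
    rcases lt_trichotomy (p * q) 0 with hlt | heq | hgt
    · have : p * q ≤ -1 := by omega
      nlinarith
    · rw [heq] at hfin; simp at hfin; omega
    · have : 1 ≤ p * q := by omega
      nlinarith
  · rintro (hb | hab | hac)
    · refine ⟨!![1, 0; 0, 1], by simp [Matrix.det_fin_two_of], ?_⟩
      subst hb
      ext i j
      fin_cases i <;> fin_cases j <;>
        simp [Matrix.mul_apply, Matrix.transpose_apply, Fin.sum_univ_two, Matrix.vecHead, Matrix.vecTail] <;> ring
    · refine ⟨!![1, -1; 0, 1], by simp [Matrix.det_fin_two_of], ?_⟩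
      subst hab
      ext i j
      fin_cases i <;> fin_cases j <;>
        simp [Matrix.mul_apply, Matrix.transpose_apply, Fin.sum_univ_two, Matrix.vecHead, Matrix.vecTail] <;> ring
    · refine ⟨!![0, -1; 1, 0], by simp [Matrix.det_fin_two_of], ?_⟩
      subst hac
      ext i j
      fin_cases i <;> fin_cases j <;>
        simp [Matrix.mul_apply, Matrix.transpose_apply, Fin.sum_univ_two, Matrix.vecHead, Matrix.vecTail] <;> ring
end

section
/- On the elliptic curve X over Q(s) obtained from y^2 + (t-2)xy - t(t-1)y = x^3 - t x^2 by the substitution t = -8s^2/(s^2-1), the two points with x-coordinate -4s^2(3s+1)(s-1)/(s^2-1)^2 and -4s^2(3s-1)(s+1)/(s^2-1)^2 (with y-coordinates chosen so the Weierstrass equation is satisfied) are 2-torsion points. -/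
/-!
Completing the square, `4 (y² + a₁xy + a₃y - x³ - a₂x² - a₄x - a₆) = (2y + a₁x + a₃)² - Ψ₂Sq(x)`
with `Ψ₂Sq = 4x³ + b₂x² + 2b₄x + b₆`. So away from characteristic `2`, every root `x` of `Ψ₂Sq`
gives a point `(x, -(a₁x + a₃)/2)` equal to its own negative, and at this point the `x`-partial
derivative of the Weierstrass equation is `-Ψ₂Sq'(x)/4`, so the point is nonsingular when `x` is
a simple root. Both given `x`-coordinates are simple roots of `Ψ₂Sq` for the base-changed curve.
-/

open WeierstrassCurve

/-- The rational function `t = -8s²/(s² - 1)` in `ℚ(s)`. -/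
noncomputable def tSub : RatFunc ℚ := -8 * RatFunc.X ^ 2 / (RatFunc.X ^ 2 - 1)

/-- The elliptic curve over `ℚ(s)` obtained from `y² + (t-2)xy - t(t-1)y = x³ - tx²`
by the base change `t = -8s²/(s² - 1)`. -/
noncomputable def W16 : WeierstrassCurve.Affine (RatFunc ℚ) where
  a₁ := tSub - 2
  a₂ := -tSub
  a₃ := -(tSub * (tSub - 1))
  a₄ := 0
  a₆ := 0

open Polynomial

namespace WeierstrassCurve

section Ψ₂Sq

variable {R : Type*} [CommRing R] (W : WeierstrassCurve R) (x : R)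

lemma eval_Ψ₂Sq : W.Ψ₂Sq.eval x = 4 * x ^ 3 + W.b₂ * x ^ 2 + 2 * W.b₄ * x + W.b₆ := by
  simp only [Ψ₂Sq, eval_add, eval_mul, eval_C, eval_pow, eval_X]

lemma eval_derivative_Ψ₂Sq :
    W.Ψ₂Sq.derivative.eval x = 12 * x ^ 2 + 2 * W.b₂ * x + 2 * W.b₄ := by
  simp only [Ψ₂Sq, derivative_add, derivative_C_mul_X_pow, derivative_C_mul_X, derivative_C,
    eval_add, eval_mul, eval_C, eval_pow, eval_X]
  norm_num
  ring

end Ψ₂Sq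

namespace Affine

variable {F : Type*} [Field F] {W : Affine F} {x : F}

lemma equation_of_eval_Ψ₂Sq_eq_zero (h2 : (2 : F) ≠ 0) (hx : W.Ψ₂Sq.eval x = 0) :
    W.Equation x (-(W.a₁ * x + W.a₃) / 2) := by
  rw [eval_Ψ₂Sq, b₂, b₄, b₆] at hx
  rw [equation_iff]
  field_simp
  linear_combination -hx

lemma nonsingular_of_eval_Ψ₂Sq_eq_zero (h2 : (2 : F) ≠ 0) (hx : W.Ψ₂Sq.eval x = 0)
    (hx' : W.Ψ₂Sq.derivative.eval x ≠ 0) : W.Nonsingular x (-(W.a₁ * x + W.a₃) / 2) := by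
  refine (nonsingular_iff _ _).mpr ⟨equation_of_eval_Ψ₂Sq_eq_zero h2 hx, Or.inl fun h => hx' ?_⟩
  rw [eval_derivative_Ψ₂Sq, b₂, b₄]
  field_simp at h
  linear_combination -2 * h

theorem exists_two_nsmul_some_eq_zero_of_eval_Ψ₂Sq_eq_zero [DecidableEq F] (h2 : (2 : F) ≠ 0)
    (hx : W.Ψ₂Sq.eval x = 0) (hx' : W.Ψ₂Sq.derivative.eval x ≠ 0) :
    ∃ (y : F) (h : W.Nonsingular x y), 2 • Point.some _ _ h = 0 := by
  refine ⟨_, nonsingular_of_eval_Ψ₂Sq_eq_zero h2 hx hx', ?_⟩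
  rw [two_nsmul]
  refine Point.add_self_of_Y_eq ?_
  rw [negY]
  field_simp
  ring

end Affine

end WeierstrassCurve

theorem RatFunc.algebraMap_mul_X_add_ne_zero {K : Type*} [Field K] {a : K} (ha : a ≠ 0) (b : K) :
    algebraMap K (RatFunc K) a * RatFunc.X + algebraMap K (RatFunc K) b ≠ 0 := by
  have h : Polynomial.C a * Polynomial.X + Polynomial.C b ≠ 0 := by
    intro h0
    simpa [h0] using degree_linear (b := b) ha
  simpa [← RatFunc.algebraMap_C, RatFunc.algebraMap_X] using RatFunc.algebraMap_ne_zero h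

open Classical in
/-- On the base-changed curve `W16` over `ℚ(s)`, the two points with `x`-coordinates
`-4s²(3s+1)(s-1)/(s²-1)²` and `-4s²(3s-1)(s+1)/(s²-1)²` (with suitable `y`-coordinates)
are `2`-torsion points. -/
theorem base_change_two_torsion_sections :
    (∃ (y : RatFunc ℚ) (h : W16.Nonsingular
        (-4 * RatFunc.X ^ 2 * (3 * RatFunc.X + 1) * (RatFunc.X - 1) /
          (RatFunc.X ^ 2 - 1) ^ 2) y),
      2 • WeierstrassCurve.Affine.Point.some _ _ h = 0) ∧
    (∃ (y : RatFunc ℚ) (h : W16.Nonsingular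
        (-4 * RatFunc.X ^ 2 * (3 * RatFunc.X - 1) * (RatFunc.X + 1) /
          (RatFunc.X ^ 2 - 1) ^ 2) y),
      2 • WeierstrassCurve.Affine.Point.some _ _ h = 0) := by
  have hXm : (RatFunc.X - 1 : RatFunc ℚ) ≠ 0 := by
    simpa [sub_eq_add_neg] using RatFunc.algebraMap_mul_X_add_ne_zero (one_ne_zero (α := ℚ)) (-1)
  have hXp : (RatFunc.X + 1 : RatFunc ℚ) ≠ 0 := by
    simpa using RatFunc.algebraMap_mul_X_add_ne_zero (one_ne_zero (α := ℚ)) 1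
  have h3Xp : (3 * RatFunc.X + 1 : RatFunc ℚ) ≠ 0 := by
    simpa using RatFunc.algebraMap_mul_X_add_ne_zero (three_ne_zero (α := ℚ)) 1
  have h3Xm : (3 * RatFunc.X - 1 : RatFunc ℚ) ≠ 0 := by
    simpa [sub_eq_add_neg] using RatFunc.algebraMap_mul_X_add_ne_zero (three_ne_zero (α := ℚ)) (-1)
  have hX2 : (RatFunc.X ^ 2 - 1 : RatFunc ℚ) = (RatFunc.X - 1) * (RatFunc.X + 1) := by ring
  refine ⟨Affine.exists_two_nsmul_some_eq_zero_of_eval_Ψ₂Sq_eq_zero two_ne_zero ?root₁ ?simple₁,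
    Affine.exists_two_nsmul_some_eq_zero_of_eval_Ψ₂Sq_eq_zero two_ne_zero ?root₂ ?simple₂⟩
  all_goals simp only [eval_Ψ₂Sq, eval_derivative_Ψ₂Sq, b₂, b₄, b₆, W16, tSub, hX2]
  case root₁ | root₂ => field_simp; ring
  case simple₁ =>
    refine ne_of_eq_of_ne
      (b := -64 * RatFunc.X ^ 3 * (3 * RatFunc.X + 1) / ((RatFunc.X - 1) * (RatFunc.X + 1) ^ 4))
      (by field_simp; ring) (by simp [RatFunc.X_ne_zero, hXm, hXp, h3Xp])
  case simple₂ =>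
    refine ne_of_eq_of_ne
      (b := 64 * RatFunc.X ^ 3 * (3 * RatFunc.X - 1) / ((RatFunc.X - 1) ^ 4 * (RatFunc.X + 1)))
      (by field_simp; ring) (by simp [RatFunc.X_ne_zero, hXm, hXp, h3Xm])
end
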